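/- arXiv:2306.02627 — 2 statements merged into one kernel-verified Lean document; each statement's English description precedes it below -/
import Mathlib

section
/- Fix p > 0 and u_r > 1. For t = 1, the integral ∫_{ℝ} (u_r² + v²)^{−1/2} · (log(u_r² + v²))^{−p/(1+p)} dv diverges (equals +∞). -/
/-!
On `v > 0` the integrand dominates `v / (u² + v²) · log (u² + v²) ^ (-p / (1 + p))`, which is the
derivative of `(1 + p) / 2 · log (u² + v²) ^ (1 / (1 + p))`. This primitive tends to `+∞`, so the
minorant is not integrable on `(0, ∞)`, and neither is the integrand.
-/

open MeasureTheory Filter Real Set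
open scoped ENNReal

theorem not_integrableOn_Ioi_of_hasDerivAt_of_tendsto_atTop {G g : ℝ → ℝ} {a : ℝ}
    (hderiv : ∀ x ∈ Ioi a, HasDerivAt G (g x) x) (hG : Tendsto G atTop atTop) :
    ¬ IntegrableOn g (Ioi a) := fun hg =>
  not_tendsto_nhds_of_tendsto_atTop hG _
    (tendsto_limUnder_of_hasDerivAt_of_integrableOn_Ioi hderiv hg)

theorem hasDerivAt_rpow_log_add_sq_div {c q x : ℝ} (hq : q ≠ 0) (hx : 1 < c + x ^ 2) :
    HasDerivAt (fun v => Real.log (c + v ^ 2) ^ q / (2 * q))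
      (x / (c + x ^ 2) * Real.log (c + x ^ 2) ^ (q - 1)) x := by
  have hsum : HasDerivAt (fun v => c + v ^ 2) (2 * x) x := by
    simpa using (hasDerivAt_pow 2 x).const_add c
  have hlog := (hsum.log (by linarith)).rpow_const (p := q) (Or.inl (Real.log_pos hx).ne')
  refine (hlog.div_const (2 * q)).congr_deriv ?_
  field_simp

theorem div_add_sq_le_rpow_neg_half {c : ℝ} (hc : 0 ≤ c) (x : ℝ) :
    x / (c + x ^ 2) ≤ (c + x ^ 2) ^ (-(1 : ℝ) / 2) := by
  have hpos : 0 ≤ c + x ^ 2 := by positivity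
  calc x / (c + x ^ 2) ≤ √(c + x ^ 2) / (c + x ^ 2) := by
        gcongr
        exact Real.le_sqrt_of_sq_le (by linarith)
    _ = (c + x ^ 2) ^ (-(1 : ℝ) / 2) := by
      rw [Real.sqrt_div_self, neg_div, Real.rpow_neg hpos, ← Real.sqrt_eq_rpow]

theorem tendsto_rpow_log_add_sq_atTop {c q : ℝ} (hq : 0 < q) :
    Tendsto (fun v => Real.log (c + v ^ 2) ^ q) atTop atTop :=
  (tendsto_rpow_atTop hq).comp <| Real.tendsto_log_atTop.comp <|
    tendsto_atTop_add_const_left _ _ (tendsto_pow_atTop two_ne_zero)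

theorem stmt_3 (p : ℝ) (hp : p > 0) (ur : ℝ) (hur : ur > 1) :
    ∫⁻ v : ℝ, ENNReal.ofReal ((ur ^ 2 + v ^ 2) ^ (-(1 : ℝ) / 2) *
      (Real.log (ur ^ 2 + v ^ 2)) ^ (-p / (1 + p))) = ⊤ := by
  set q : ℝ := 1 / (1 + p)
  have hq : 0 < q := by positivity
  have hq1 : q - 1 = -p / (1 + p) := by simp only [q]; field_simp; ring
  have hsum (v : ℝ) : 1 < ur ^ 2 + v ^ 2 := by nlinarith [sq_nonneg v]
  set f : ℝ → ℝ := fun v => (ur ^ 2 + v ^ 2) ^ (-(1 : ℝ) / 2) *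
    Real.log (ur ^ 2 + v ^ 2) ^ (-p / (1 + p))
  set g : ℝ → ℝ := fun v => v / (ur ^ 2 + v ^ 2) * Real.log (ur ^ 2 + v ^ 2) ^ (-p / (1 + p))
  have hlog_nonneg (v : ℝ) : 0 ≤ Real.log (ur ^ 2 + v ^ 2) := (Real.log_pos (hsum v)).le
  have hf_nonneg (v : ℝ) : 0 ≤ f v :=
    mul_nonneg (Real.rpow_nonneg (by linarith [hsum v]) _) (Real.rpow_nonneg (hlog_nonneg v) _)
  have hg_not_int : ¬ IntegrableOn g (Ioi 0) :=
    not_integrableOn_Ioi_of_hasDerivAt_of_tendsto_atTop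
      (fun x _ => hq1 ▸ hasDerivAt_rpow_log_add_sq_div hq.ne' (hsum x))
      ((tendsto_rpow_log_add_sq_atTop hq).atTop_div_const (by positivity))
  have hf_meas : Measurable f := by fun_prop
  rw [← not_ne_iff, lintegral_ofReal_ne_top_iff_integrable hf_meas.aestronglyMeasurable
    (ae_of_all _ hf_nonneg)]
  refine fun hf => hg_not_int (hf.integrableOn.mono' (by fun_prop) ?_)
  filter_upwards [ae_restrict_mem measurableSet_Ioi] with v (hv : 0 < v)
  have hlog_rpow_nonneg := Real.rpow_nonneg (hlog_nonneg v) (-p / (1 + p))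
  rw [Real.norm_of_nonneg (mul_nonneg (by positivity) hlog_rpow_nonneg)]
  exact mul_le_mul_of_nonneg_right (div_add_sq_le_rpow_neg_half (sq_nonneg ur) v) hlog_rpow_nonneg
end

section
/- Let p > 0 and let φ(ξ) = exp((log ξ)^{1/(1+p)}) with the principal branch of log. There exists r₂ > e such that for every r ≥ r₂ and every ξ with Re ξ ≥ log r, |φ'(ξ)| ≤ 1 / (√(log r) · (log log r)^{p/(1+p)}). -/
/-!
Write `s = log |ξ|`. Since `Re ξ ≥ log r > 0`, the principal logarithm satisfies
`s ≤ |log ξ| ≤ s + π`, so with `α = 1/(1+p) < 1` the chain rule gives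
`|φ'(ξ)| ≤ exp((s + π)^α - s) · s^(α-1)`. As `(s + π)^α ≤ s/2` for large `s`, this is at most
`exp(-s/2) · s^(α-1)`, which decreases in `s`; evaluating it at `s = log log r ≤ log |ξ|` gives
exactly `1 / (√(log r) · (log log r)^(p/(1+p)))`.
-/

open Real Filter Topology

lemma eventually_rpow_add_le_half {α : ℝ} (hα₀ : 0 ≤ α) (hα₁ : α < 1) (c : ℝ) :
    ∀ᶠ x : ℝ in atTop, (x + c) ^ α ≤ x / 2 := by
  have hsmall : Tendsto (fun x : ℝ => 2 ^ α * x ^ (α - 1)) atTop (𝓝 0) := by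
    simpa [neg_sub] using (tendsto_rpow_neg_atTop (sub_pos.2 hα₁)).const_mul ((2 : ℝ) ^ α)
  filter_upwards [hsmall.eventually_le_const (by norm_num : (0 : ℝ) < 1 / 2),
    eventually_ge_atTop |c|, eventually_gt_atTop 0] with x hx hcx hx₀
  calc (x + c) ^ α ≤ (2 * x) ^ α := by
        gcongr
        · linarith [neg_abs_le c]
        · linarith [le_abs_self c]
    _ = 2 ^ α * x ^ (α - 1) * x := by
        rw [mul_rpow (by norm_num) hx₀.le, mul_assoc, ← rpow_add_one hx₀.ne']
        ring_nf
    _ ≤ 1 / 2 * x := by gcongr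
    _ = x / 2 := by ring

lemma Complex.norm_log_le_abs_log_norm_add_pi (z : ℂ) : ‖log z‖ ≤ |Real.log ‖z‖| + π :=
  calc ‖log z‖ ≤ |(log z).re| + |(log z).im| := norm_le_abs_re_add_abs_im _
    _ ≤ |Real.log ‖z‖| + π := by
        rw [log_re, log_im]
        gcongr
        exact abs_arg_le_pi z

lemma norm_deriv_cexp_clog_cpow_le {α : ℝ} (hα₀ : 0 ≤ α) (hα₁ : α ≤ 1) {ξ : ℂ}
    (hre : 0 < ξ.re) (hnorm : 1 < ‖ξ‖) :
    ‖deriv (fun w => Complex.exp (Complex.log w ^ (α : ℂ))) ξ‖ ≤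
      Real.exp ((Real.log ‖ξ‖ + π) ^ α - Real.log ‖ξ‖) * Real.log ‖ξ‖ ^ (α - 1) := by
  have hs : 0 < Real.log ‖ξ‖ := Real.log_pos hnorm
  have hle_s : ‖Complex.log ξ‖ ≤ Real.log ‖ξ‖ + π := by
    simpa only [abs_of_pos hs] using Complex.norm_log_le_abs_log_norm_add_pi ξ
  set s := Real.log ‖ξ‖
  have hlog_re : (Complex.log ξ).re = s := Complex.log_re ξ
  have hs_le : s ≤ ‖Complex.log ξ‖ := hlog_re ▸ Complex.re_le_norm _
  have hderiv := ((Complex.hasDerivAt_log (Or.inl hre)).cpow_const (c := (α : ℂ))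
    (Or.inl (hlog_re ▸ hs : 0 < (Complex.log ξ).re))).cexp
  have hsub : (α : ℂ) - 1 = ((α - 1 : ℝ) : ℂ) := by push_cast; ring
  have hinv : ‖ξ‖⁻¹ = Real.exp (-s) := by rw [Real.exp_neg, Real.exp_log (by linarith)]
  rw [hderiv.deriv, hsub, norm_mul, Complex.norm_exp, norm_mul, norm_mul, norm_inv,
    Complex.norm_real, Complex.norm_cpow_real, Real.norm_eq_abs, abs_of_nonneg hα₀, hinv]
  have hre_le : (Complex.log ξ ^ (α : ℂ)).re ≤ (s + π) ^ α :=
    (Complex.re_le_norm _).trans ((Complex.norm_cpow_real _ _).trans_le (by gcongr))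
  have hpow_le : ‖Complex.log ξ‖ ^ (α - 1) ≤ s ^ (α - 1) :=
    rpow_le_rpow_of_nonpos hs hs_le (by linarith)
  calc Real.exp (Complex.log ξ ^ (α : ℂ)).re * (α * ‖Complex.log ξ‖ ^ (α - 1) * Real.exp (-s))
      ≤ Real.exp ((s + π) ^ α) * (1 * s ^ (α - 1) * Real.exp (-s)) := by gcongr
    _ = Real.exp ((s + π) ^ α - s) * s ^ (α - 1) := by
        rw [Real.exp_sub, Real.exp_neg]
        ring

theorem stmt_8 (p : ℝ) (hp : p > 0) :
    ∃ r₂ > Real.exp 1, ∀ r ≥ r₂, ∀ ξ : ℂ, ξ.re ≥ Real.log r →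
      ‖
          (deriv (fun w : ℂ => Complex.exp ((Complex.log w) ^ ((1 : ℂ) / (1 + (p : ℂ))))) ξ)‖ ≤
        1 / (Real.sqrt (Real.log r) * (Real.log (Real.log r)) ^ (p / (1 + p))) := by
  set α : ℝ := 1 / (1 + p)
  have hα₀ : 0 ≤ α := by positivity
  have hα₁ : α < 1 := (div_lt_one (by linarith)).2 (by linarith)
  have hexponent : (1 : ℂ) / (1 + (p : ℂ)) = (α : ℂ) := by simp only [α]; push_cast; ring
  have hα_sub : α - 1 = -(p / (1 + p)) := by simp only [α]; field_simp; ring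
  obtain ⟨M, hM⟩ := (eventually_rpow_add_le_half hα₀ hα₁ π).exists_forall_of_atTop
  have hM₁ : 0 < max M 1 := lt_max_of_lt_right one_pos
  refine ⟨Real.exp (Real.exp (max M 1)), by gcongr; exact one_lt_exp_iff.2 hM₁,
    fun r hr ξ hξ => ?_⟩
  set L := Real.log r
  have hL : Real.exp (max M 1) ≤ L := (le_log_iff_exp_le ((exp_pos _).trans_le hr)).2 hr
  have hL₁ : 1 < L := (one_lt_exp_iff.2 hM₁).trans_le hL
  have hL₀ : 0 < L := one_pos.trans hL₁
  have hξ_norm : L ≤ ‖ξ‖ := hξ.trans (Complex.re_le_norm ξ)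
  have hLL : max M 1 ≤ Real.log L := (le_log_iff_exp_le hL₀).2 hL
  have hLL₀ : 0 < Real.log L := hM₁.trans_le hLL
  have hs : Real.log L ≤ Real.log ‖ξ‖ := log_le_log hL₀ hξ_norm
  have hM_s := hM _ ((le_max_left _ _).trans (hLL.trans hs))
  rw [hexponent]
  refine (norm_deriv_cexp_clog_cpow_le hα₀ hα₁.le (hL₀.trans_le hξ)
    (hL₁.trans_le hξ_norm)).trans ?_
  calc Real.exp ((Real.log ‖ξ‖ + π) ^ α - Real.log ‖ξ‖) * Real.log ‖ξ‖ ^ (α - 1)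
      ≤ Real.exp (-(Real.log L / 2)) * Real.log L ^ (α - 1) :=
        mul_le_mul (exp_le_exp.2 (by linarith)) (rpow_le_rpow_of_nonpos hLL₀ hs (by linarith))
          (rpow_nonneg (hLL₀.le.trans hs) _) (exp_pos _).le
    _ = 1 / (√L * Real.log L ^ (p / (1 + p))) := by
        rw [← log_sqrt hL₀.le, exp_neg, exp_log (sqrt_pos.2 hL₀), hα_sub, rpow_neg hLL₀.le,
          one_div, mul_inv]
end
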